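/- Let d ≥ 1 and u, v ∈ ℝ^d. Let a = (1, …, 1) ∈ ℝ^d and let R denote the orthogonal projection onto the hyperplane a^⊥ = {x : Σ_j x_j = 0}, i.e. R x = x − (Σ_j x_j / d) a. Assume R u ≠ 0, R v ≠ 0, and that there is no t > 0 with R u = −t · R v. Then there exists x ∈ ℤ^d with Σ_j x_j = 0, Σ_j x_j u_j > 0, and Σ_j x_j v_j > 0. -/

import Mathlib

/-!
Write `a`, `b` for the centred vectors `R u`, `R v`. Since `a` is not a negative multiple of `b`,
Cauchy–Schwarz is strict for `a` and `-b`, so the bisector `‖b‖ a + ‖a‖ b` has positive inner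
product with both. The real vectors with this property form an open cone, which therefore contains
an integer vector `n`; recentring it to `d n - (∑ n) 1` gives an integer vector with sum zero whose
inner products with `u` and `v` are `d` times those of `n` with `a` and `b`.
-/
open Filter Topology Matrix

theorem tendsto_floor_mul_div_atTop (a : ℝ) :
    Tendsto (fun x : ℝ => (⌊a * x⌋ : ℝ) / x) atTop (𝓝 a) := by
  have lower : Tendsto (fun x : ℝ => a - x⁻¹) atTop (𝓝 a) := by
    simpa using (tendsto_const_nhds (x := a)).sub (tendsto_inv_atTop_zero (𝕜 := ℝ))
  refine tendsto_of_tendsto_of_tendsto_of_le_of_le' lower tendsto_const_nhds ?_ ?_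
  · filter_upwards [eventually_gt_atTop 0] with x hx
    rw [le_div_iff₀ hx, sub_mul, inv_mul_cancel₀ hx.ne']
    linarith [Int.lt_floor_add_one (a * x)]
  · filter_upwards [eventually_gt_atTop 0] with x hx
    rw [div_le_iff₀ hx]
    exact Int.floor_le _

theorem exists_intCast_mem_of_isOpen {ι : Type*} {S : Set (ι → ℝ)} (hS : IsOpen S)
    (hsmul : ∀ x ∈ S, ∀ c : ℝ, 0 < c → c • x ∈ S) {x : ι → ℝ} (hx : x ∈ S) :
    ∃ n : ι → ℤ, (fun i => (n i : ℝ)) ∈ S := by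
  -- `⌊c x⌋ / c → x`, and `S` is invariant under scaling by `c > 0`
  have approx : Tendsto (fun c : ℝ => fun i => (⌊x i * c⌋ : ℝ) / c) atTop (𝓝 x) :=
    tendsto_pi_nhds.2 fun i => tendsto_floor_mul_div_atTop (x i)
  obtain ⟨c, hcS, hc⟩ :=
    ((approx.eventually (hS.mem_nhds hx)).and (eventually_gt_atTop 0)).exists
  refine ⟨fun i => ⌊x i * c⌋, ?_⟩
  convert hsmul _ hcS c hc using 1
  ext i
  simp [mul_div_cancel₀ _ hc.ne']

section InnerProductSpace

variable {F : Type*} [NormedAddCommGroup F] [InnerProductSpace ℝ F]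

theorem norm_mul_norm_add_inner_pos {a b : F} (ha : a ≠ 0) (hb : b ≠ 0)
    (hab : ¬∃ t : ℝ, 0 < t ∧ a = (-t) • b) : 0 < ‖a‖ * ‖b‖ + inner ℝ a b := by
  refine lt_of_le_of_ne (by linarith [neg_le_of_abs_le (abs_real_inner_le_norm a b)]) ?_
  intro h
  -- equality in Cauchy–Schwarz for `a` and `-b`
  have hb' : 0 < ‖b‖ := norm_pos_iff.2 hb
  have : inner ℝ a (-b) = ‖a‖ * ‖-b‖ := by rw [inner_neg_right, norm_neg]; linarith
  rw [inner_eq_norm_mul_iff_real, norm_neg] at this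
  refine hab ⟨‖a‖ / ‖b‖, div_pos (norm_pos_iff.2 ha) hb', ?_⟩
  rw [neg_smul, ← smul_neg, div_eq_inv_mul, mul_smul, ← this, inv_smul_smul₀ hb'.ne']

theorem exists_inner_pos_inner_pos {a b : F} (ha : a ≠ 0) (hb : b ≠ 0)
    (hab : ¬∃ t : ℝ, 0 < t ∧ a = (-t) • b) :
    ∃ x : F, 0 < inner ℝ x a ∧ 0 < inner ℝ x b := by
  have key := norm_mul_norm_add_inner_pos ha hb hab
  have ha' : 0 < ‖a‖ := norm_pos_iff.2 ha
  have hb' : 0 < ‖b‖ := norm_pos_iff.2 hb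
  refine ⟨‖b‖ • a + ‖a‖ • b, ?_, ?_⟩
  · calc 0 < ‖a‖ * (‖a‖ * ‖b‖ + inner ℝ a b) := mul_pos ha' key
      _ = inner ℝ (‖b‖ • a + ‖a‖ • b) a := by
        rw [inner_add_left, real_inner_smul_left, real_inner_smul_left,
          real_inner_self_eq_norm_mul_norm, real_inner_comm]
        ring
  · calc 0 < ‖b‖ * (‖a‖ * ‖b‖ + inner ℝ a b) := mul_pos hb' key
      _ = inner ℝ (‖b‖ • a + ‖a‖ • b) b := by
        rw [inner_add_left, real_inner_smul_left, real_inner_smul_left,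
          real_inner_self_eq_norm_mul_norm]
        ring

end InnerProductSpace

theorem exists_dotProduct_pos_dotProduct_pos {ι : Type*} [Fintype ι] {a b : ι → ℝ}
    (ha : a ≠ 0) (hb : b ≠ 0) (hab : ¬∃ t : ℝ, 0 < t ∧ a = fun j => -t * b j) :
    ∃ x : ι → ℝ, 0 < x ⬝ᵥ a ∧ 0 < x ⬝ᵥ b := by
  obtain ⟨x, hxa, hxb⟩ := exists_inner_pos_inner_pos (F := EuclideanSpace ℝ ι)
    (a := WithLp.toLp 2 a) (b := WithLp.toLp 2 b) (by simpa using ha) (by simpa using hb)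
    fun ⟨t, ht, h⟩ => hab ⟨t, ht, funext fun j => by
      simpa using congrFun (congrArg WithLp.ofLp h) j⟩
  refine ⟨x.ofLp, ?_, ?_⟩
  · simpa [EuclideanSpace.inner_eq_star_dotProduct, dotProduct_comm] using hxa
  · simpa [EuclideanSpace.inner_eq_star_dotProduct, dotProduct_comm] using hxb

theorem exists_int_dotProduct_pos_dotProduct_pos {ι : Type*} [Fintype ι] {a b : ι → ℝ}
    (ha : a ≠ 0) (hb : b ≠ 0) (hab : ¬∃ t : ℝ, 0 < t ∧ a = fun j => -t * b j) :
    ∃ n : ι → ℤ, 0 < (fun j => (n j : ℝ)) ⬝ᵥ a ∧ 0 < (fun j => (n j : ℝ)) ⬝ᵥ b := by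
  obtain ⟨x, hx⟩ := exists_dotProduct_pos_dotProduct_pos ha hb hab
  refine exists_intCast_mem_of_isOpen (S := {x | 0 < x ⬝ᵥ a ∧ 0 < x ⬝ᵥ b}) ?_ ?_ hx
  · exact (isOpen_lt continuous_const (continuous_id.dotProduct continuous_const)).inter
      (isOpen_lt continuous_const (continuous_id.dotProduct continuous_const))
  · rintro x ⟨hxa, hxb⟩ c hc
    rw [Set.mem_ofPred_eq, smul_dotProduct, smul_dotProduct]
    exact ⟨mul_pos hc hxa, mul_pos hc hxb⟩

section Recentre

variable {ι : Type*} [Fintype ι]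

theorem sum_card_mul_sub_sum (n : ι → ℤ) : ∑ j, (Fintype.card ι * n j - ∑ i, n i) = 0 := by
  simp [Finset.sum_sub_distrib, ← Finset.mul_sum]

theorem sum_card_mul_sub_sum_mul [Nonempty ι] (n : ι → ℤ) (w : ι → ℝ) :
    ∑ j, ((Fintype.card ι * n j - ∑ i, n i : ℤ) : ℝ) * w j
      = Fintype.card ι * ∑ j, (n j : ℝ) * (w j - (∑ i, w i) / Fintype.card ι) := by
  have hcard : (Fintype.card ι : ℝ) ≠ 0 := Nat.cast_ne_zero.2 Fintype.card_ne_zero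
  push_cast
  simp only [sub_mul, mul_sub, Finset.sum_sub_distrib, ← Finset.sum_mul, ← Finset.mul_sum,
    mul_assoc]
  field_simp

end Recentre

theorem stmt_2 (d : ℕ) (hd : 1 ≤ d) (u v : Fin d → ℝ)
    (hu : (fun j => u j - (∑ i, u i) / d) ≠ 0)
    (hv : (fun j => v j - (∑ i, v i) / d) ≠ 0)
    (hnot : ¬ ∃ t : ℝ, 0 < t ∧
      (fun j => u j - (∑ i, u i) / d) = (fun j => -t * (v j - (∑ i, v i) / d))) :
    ∃ x : Fin d → ℤ, (∑ j, x j) = 0 ∧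
      0 < ∑ j, (x j : ℝ) * u j ∧ 0 < ∑ j, (x j : ℝ) * v j := by
  have : NeZero d := ⟨by omega⟩
  obtain ⟨n, hnu, hnv⟩ := exists_int_dotProduct_pos_dotProduct_pos hu hv hnot
  have recentre := sum_card_mul_sub_sum_mul n
  simp only [Fintype.card_fin] at recentre
  refine ⟨fun j => d * n j - ∑ i, n i, by simpa using sum_card_mul_sub_sum n, ?_, ?_⟩
  · rw [recentre]
    exact mul_pos (by positivity) hnu
  · rw [recentre]
    exact mul_pos (by positivity) hnv
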